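/- Let B be a nonempty subset of (0,1) that is closed in ℝ and θ-invariant (B = θ(B)), and let ξ₀ ∈ [0,1] with ξ₀ ∉ B. Then there is a constant α > 0 (depending only on B and ξ₀) such that for every sequence x₁,x₂,… ∈ {0,1}, the sample path defined by ξ_t := ξ_{t−1}/2 + x_t/2 satisfies d_B(ξ_t) ≥ α·2^{−t} for all t ≥ 0 and d_{B_e^c}(ξ_t) ≥ α·2^{−t} for all t ≥ 1. -/

import Mathlib

open Set MeasureTheory Filter

open Classical in
/-- The doubling map `θ` on `[0,1)`: `θ(ξ) = 2ξ` for `ξ < 1/2`, `2ξ − 1` otherwise. -/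
noncomputable def theta (ξ : ℝ) : ℝ := if ξ < 1/2 then 2*ξ else 2*ξ - 1

open Classical in
/-- `ξ* = ξ + 1/2` for `ξ ∈ [0,1/2]` and `ξ − 1/2` for `ξ ∈ (1/2,1]`. -/
noncomputable def starR (ξ : ℝ) : ℝ := if ξ ≤ 1/2 then ξ + 1/2 else ξ - 1/2


/-- The exit set `B_e^c = {ξ/2 + j/2 : ξ ∈ B, j ∈ {0,1}} ∩ ([0,1] \ B)`. -/
def BeI (B : Set ℝ) : Set ℝ :=
  {y | ∃ ξ ∈ B, y = ξ/2 ∨ y = ξ/2 + 1/2} ∩ (Set.Icc (0:ℝ) 1 \ B)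

/-- The barrier set `B_b = (B_e^c)*`. -/
noncomputable def BbI (B : Set ℝ) : Set ℝ := starR '' BeI B

/-!
Let `S = B + ℤ`. Because `θ b ∈ B` and `2b − θ b ∈ {0, 1}`, every map `y ↦ 2y − j` with `j ∈ ℤ`
sends `S`, and also `B_e^c` (as `2(b/2 + i/2) − j = b + (i − j)`), into `S`. Since a step
`ξ ↦ ξ/2 + j/2` halves distances, both `d_S(ξ_{t+1})` and `d_{B_e^c}(ξ_{t+1})` are at least
`d_S(ξ_t)/2`, so `α = d_S(ξ₀)` works, as `d_B ≥ d_S`. It is positive because `S` is closed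
(compact plus closed) and the only translate of `B ⊂ (0,1)` meeting `[0,1]` is `B` itself.
-/

open Pointwise Metric

def intTranslates (B : Set ℝ) : Set ℝ := B + range ((↑) : ℤ → ℝ)

lemma subset_intTranslates (B : Set ℝ) : B ⊆ intTranslates B :=
  fun b hb => ⟨b, hb, 0, ⟨0, Int.cast_zero⟩, add_zero b⟩

lemma IsCompact.isClosed_intTranslates {B : Set ℝ} (hB : IsCompact B) :
    IsClosed (intTranslates B) :=
  Real.isClosed_range_intCast.add_left_of_isCompact hB

lemma add_intCast_mem_intTranslates {B : Set ℝ} {b : ℝ} (hb : b ∈ B) (n : ℤ) :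
    b + n ∈ intTranslates B :=
  ⟨b, hb, n, ⟨n, rfl⟩, rfl⟩

lemma notMem_intTranslates {B : Set ℝ} (hB : B ⊆ Ioo 0 1) {ξ : ℝ} (hξ : ξ ∈ Icc 0 1)
    (hξB : ξ ∉ B) : ξ ∉ intTranslates B := by
  rintro ⟨b, hb, _, ⟨n, rfl⟩, rfl⟩
  obtain ⟨hb0, hb1⟩ := hB hb
  obtain ⟨hξ0, hξ1⟩ := hξ
  have hn : n = 0 := by
    have hn_gt : -1 < n := by exact_mod_cast (by linarith : (-1 : ℝ) < n)
    have hn_lt : n < 1 := by exact_mod_cast (by linarith : (n : ℝ) < 1)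
    omega
  simp [hn, hb] at hξB

lemma two_mul_sub_theta_eq_zero_or_one (b : ℝ) : 2 * b - theta b = 0 ∨ 2 * b - theta b = 1 := by
  unfold theta
  split_ifs <;> [left; right] <;> ring

lemma two_mul_sub_intCast_mem_intTranslates {B : Set ℝ} (hθ : theta '' B ⊆ B) {y : ℝ}
    (hy : y ∈ intTranslates B) (j : ℤ) : 2 * y - j ∈ intTranslates B := by
  obtain ⟨b, hb, _, ⟨n, rfl⟩, rfl⟩ := hy
  have hθb : theta b ∈ B := hθ (mem_image_of_mem theta hb)
  rcases two_mul_sub_theta_eq_zero_or_one b with h | h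
  · convert add_intCast_mem_intTranslates hθb (2 * n - j) using 1
    push_cast; linarith
  · convert add_intCast_mem_intTranslates hθb (1 + 2 * n - j) using 1
    push_cast; linarith

lemma two_mul_sub_intCast_mem_intTranslates_of_mem_BeI {B : Set ℝ} {y : ℝ} (hy : y ∈ BeI B)
    (j : ℤ) : 2 * y - j ∈ intTranslates B := by
  obtain ⟨⟨b, hb, rfl | rfl⟩, -⟩ := hy
  · convert add_intCast_mem_intTranslates hb (-j) using 1
    push_cast; ring
  · convert add_intCast_mem_intTranslates hb (1 - j) using 1
    push_cast; ring

lemma BeI_nonempty {B : Set ℝ} (hne : B.Nonempty) (hB : B ⊆ Ioo 0 1) (hBc : IsCompact B) :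
    (BeI B).Nonempty := by
  obtain ⟨b, hb, hleast⟩ := hBc.exists_isLeast hne
  obtain ⟨hb0, hb1⟩ := hB hb
  refine ⟨b / 2, ⟨b, hb, Or.inl rfl⟩, ⟨by linarith, by linarith⟩, fun hb2 => ?_⟩
  linarith [hleast hb2]

lemma infDist_div_two_le_infDist_half_add {S T : Set ℝ} (hT : T.Nonempty) {j : ℝ}
    (hTS : ∀ y ∈ T, 2 * y - j ∈ S) (ξ : ℝ) :
    infDist ξ S / 2 ≤ infDist (ξ / 2 + j / 2) T := by
  refine (le_infDist hT).2 fun y hy => ?_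
  have hdist : dist (ξ / 2 + j / 2) y = dist ξ (2 * y - j) / 2 := by
    rw [Real.dist_eq, Real.dist_eq, show ξ / 2 + j / 2 - y = (ξ - (2 * y - j)) / 2 by ring,
      abs_div, abs_two]
  rw [hdist]
  gcongr
  exact infDist_le_dist_of_mem (hTS y hy)

lemma two_zpow_neg_succ (t : ℕ) : (2 : ℝ) ^ (-((t + 1 : ℕ) : ℤ)) = 2 ^ (-(t : ℤ)) / 2 := by
  rw [zpow_neg, zpow_neg, zpow_natCast, zpow_natCast, pow_succ, mul_inv, div_eq_mul_inv]

lemma mul_two_zpow_neg_le_of_div_two_le {f : ℕ → ℝ} (hf : ∀ t, f t / 2 ≤ f (t + 1)) (t : ℕ) :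
    f 0 * 2 ^ (-(t : ℤ)) ≤ f t := by
  induction t with
  | zero => simp
  | succ t ih =>
    rw [two_zpow_neg_succ, mul_div_assoc']
    linarith [hf t]

/-- **Lemma.** For a nonempty, closed, `θ`-invariant `B ⊂ (0,1)` and
`ξ₀ ∈ [0,1] \ B`, there is `α > 0` such that every sample path `ξ_t = ξ_{t−1}/2 + x_t/2`
satisfies `d_B(ξ_t) ≥ α 2^{−t}` for all `t ≥ 0` and `d_{B_e^c}(ξ_t) ≥ α 2^{−t}` for `t ≥ 1`. -/
theorem samplePath_dist_lower_bound (B : Set ℝ) (hne : B.Nonempty)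
    (hB : B ⊆ Set.Ioo 0 1) (hcl : IsClosed B) (hinv : B = theta '' B)
    (ξ₀ : ℝ) (hξ₀ : ξ₀ ∈ Set.Icc (0:ℝ) 1) (hξ₀B : ξ₀ ∉ B) :
    ∃ α > (0:ℝ), ∀ (x : ℕ → Fin 2) (path : ℕ → ℝ), path 0 = ξ₀ →
      (∀ t : ℕ, path (t+1) = path t / 2 + (x (t+1) : ℝ) / 2) →
      (∀ t : ℕ, α * 2 ^ (-(t:ℤ)) ≤ Metric.infDist (path t) B) ∧
      (∀ t : ℕ, 1 ≤ t → α * 2 ^ (-(t:ℤ)) ≤ Metric.infDist (path t) (BeI B)) := by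
  have hBc : IsCompact B := isCompact_Icc.of_isClosed_subset hcl (hB.trans Ioo_subset_Icc_self)
  set S := intTranslates B
  have hα : 0 < infDist ξ₀ S :=
    (hBc.isClosed_intTranslates.notMem_iff_infDist_pos (hne.mono (subset_intTranslates B))).1
      (notMem_intTranslates hB hξ₀ hξ₀B)
  refine ⟨infDist ξ₀ S, hα, fun x path h0 hrec => ?_⟩
  have hstep : ∀ t {T : Set ℝ}, T.Nonempty → (∀ y ∈ T, ∀ j : ℤ, 2 * y - j ∈ S) →
      infDist (path t) S / 2 ≤ infDist (path (t + 1)) T := fun t T hT hTS => by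
    rw [hrec t]
    exact infDist_div_two_le_infDist_half_add hT (fun y hy => by
      simpa using hTS y hy (x (t + 1) : ℕ)) _
  have hS : ∀ t : ℕ, infDist ξ₀ S * 2 ^ (-(t : ℤ)) ≤ infDist (path t) S := by
    simpa only [h0] using mul_two_zpow_neg_le_of_div_two_le fun t =>
      hstep t (hne.mono (subset_intTranslates B))
        fun y hy => two_mul_sub_intCast_mem_intTranslates hinv.symm.le hy
  refine ⟨fun t => (hS t).trans (infDist_le_infDist_of_subset (subset_intTranslates B) hne), ?_⟩
  rintro (_ | t) ht
  · omega
  calc infDist ξ₀ S * 2 ^ (-((t + 1 : ℕ) : ℤ))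
      = infDist ξ₀ S * 2 ^ (-(t : ℤ)) / 2 := by rw [two_zpow_neg_succ, mul_div_assoc']
    _ ≤ infDist (path t) S / 2 := by gcongr; exact hS t
    _ ≤ infDist (path (t + 1)) (BeI B) :=
      hstep t (BeI_nonempty hne hB hBc) fun y hy =>
        two_mul_sub_intCast_mem_intTranslates_of_mem_BeI hy
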